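/- arXiv:2506.14421 — 5 statements merged into one kernel-verified Lean document; each statement's English description precedes it below -/
import Mathlib

section
/- Let p be a minor-monotone graph parameter. Then its clique-sum extension p* is also minor-monotone: for every graph G and every minor H of G, p*(H) ≤ p*(G). -/
/-!
Lift an optimal tree decomposition of `G` along a minor model `(S_w)` of `H`: node `t` gets the
bag `{w | S_w ∩ β(t) ≠ ∅}`; connectivity of the branch sets gives the subtree axiom. The torso of
the lifted decomposition at `t` is a minor of the original torso at `t`, with branch sets
`S_w ∩ β(t)`. The key point is that a connected set of `G` meeting `β(t)` stays connected in the
torso: while a walk is outside `β(t)` its vertices lie in bags of a single component of `T - t`,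
so it leaves and re-enters `β(t)` at vertices of the adhesion with the neighbour `t'` of `t` in
that component, which is a clique of the torso. The same argument shows that a connected set
meeting two adjacent bags meets their adhesion, which realises the torso edges coming from
adhesions. Minor-monotonicity of `p` then bounds every lifted torso.
-/

/-- `H` is a minor of `G`, witnessed by a minor model: a family of nonempty, pairwise
disjoint, connected branch sets, one per vertex of `H`, with edges of `H` realized by
edges of `G` between the corresponding branch sets. -/
def IsGraphMinor {W V : Type*} (H : SimpleGraph W) (G : SimpleGraph V) : Prop :=
  ∃ S : W → Set V,
    (∀ w, (S w).Nonempty) ∧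
    (∀ w, (G.induce (S w)).Connected) ∧
    (∀ w w', w ≠ w' → Disjoint (S w) (S w')) ∧
    (∀ w w', H.Adj w w' → ∃ x ∈ S w, ∃ y ∈ S w', G.Adj x y)

/-- The `(k × k)`-grid: vertices `[k] × [k]`, edges between pairs at `ℓ₁`-distance `1`. -/
def gridGraph (k : ℕ) : SimpleGraph (Fin k × Fin k) :=
  SimpleGraph.fromRel (fun a b => Nat.dist a.1.val b.1.val + Nat.dist a.2.val b.2.val = 1)

/-- `G` contains `H` as an `X`-rooted minor: a minor model in which every branch set
meets `X`. -/
def HasRootedMinor {V W : Type*} (G : SimpleGraph V) (X : Set V) (H : SimpleGraph W) : Prop :=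
  ∃ S : W → Set V,
    (∀ w, (S w ∩ X).Nonempty) ∧
    (∀ w, (G.induce (S w)).Connected) ∧
    (∀ w w', w ≠ w' → Disjoint (S w) (S w')) ∧
    (∀ w w', H.Adj w w' → ∃ x ∈ S w, ∃ y ∈ S w', G.Adj x y)

/-- The bidimensionality of `X` in `G`: the maximum `ℓ` such that `G` contains the
`(ℓ × ℓ)`-grid as an `X`-rooted minor. -/
noncomputable def bidim {V : Type*} (G : SimpleGraph V) (X : Set V) : ℕ :=
  sSup {ℓ : ℕ | HasRootedMinor G X (gridGraph ℓ)}

/-- A graph parameter: a function assigning a natural number to every (simple) graph. -/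
def GraphParam : Type 1 := {V : Type} → SimpleGraph V → ℕ

/-- A graph parameter is minor-monotone if it does not increase when passing to minors. -/
def MinorMonotone (p : GraphParam) : Prop :=
  ∀ {V W : Type} (G : SimpleGraph V) (H : SimpleGraph W), IsGraphMinor H G → p H ≤ p G

/-- A graph parameter is isomorphism-invariant. -/
def IsoInvariant (p : GraphParam) : Prop :=
  ∀ {V W : Type} (G : SimpleGraph V) (H : SimpleGraph W), Nonempty (G ≃g H) → p G = p H

/-- A tree decomposition of a graph `G` with nodes indexed by `ι`. -/
structure TreeDecomp {V : Type} (G : SimpleGraph V) (ι : Type) where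
  tree : SimpleGraph ι
  isTree : tree.IsTree
  bag : ι → Set V
  covers_vertex : ∀ v : V, ∃ t, v ∈ bag t
  covers_edge : ∀ ⦃u v : V⦄, G.Adj u v → ∃ t, u ∈ bag t ∧ v ∈ bag t
  subtree : ∀ v : V, (tree.induce {t | v ∈ bag t}).Connected

/-- The torso of a tree decomposition at a node `t`: the graph induced on the bag of `t`,
with all edges added between vertices lying in a common adhesion with a neighboring bag. -/
def TreeDecomp.torso {V ι : Type} {G : SimpleGraph V} (D : TreeDecomp G ι) (t : ι) :
    SimpleGraph (D.bag t) :=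
  SimpleGraph.fromRel (fun u v =>
    G.Adj (u : V) (v : V) ∨
      ∃ t', D.tree.Adj t t' ∧ (u : V) ∈ D.bag t' ∧ (v : V) ∈ D.bag t')

/-- The clique-sum extension of a graph parameter `p`:
`p*(G) ≤ k` iff `G` has a tree decomposition all of whose torsos `H` satisfy `p H ≤ k`. -/
noncomputable def cliqueSumExt (p : GraphParam) : GraphParam :=
  fun {V} G => sInf {k : ℕ | ∃ (ι : Type) (D : TreeDecomp G ι), ∀ t, p (D.torso t) ≤ k}

open SimpleGraph

structure MinorModel {W V : Type*} (H : SimpleGraph W) (G : SimpleGraph V) where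
  branch : W → Set V
  nonempty : ∀ w, (branch w).Nonempty
  connected : ∀ w, (G.induce (branch w)).Connected
  disjoint : ∀ w w', w ≠ w' → Disjoint (branch w) (branch w')
  exists_adj : ∀ w w', H.Adj w w' → ∃ x ∈ branch w, ∃ y ∈ branch w', G.Adj x y

theorem isGraphMinor_iff_nonempty_minorModel {W V : Type*} {H : SimpleGraph W}
    {G : SimpleGraph V} : IsGraphMinor H G ↔ Nonempty (MinorModel H G) :=
  ⟨fun ⟨S, hne, hconn, hdisj, hadj⟩ => ⟨⟨S, hne, hconn, hdisj, hadj⟩⟩,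
    fun ⟨M⟩ => ⟨M.branch, M.nonempty, M.connected, M.disjoint, M.exists_adj⟩⟩

namespace SimpleGraph

theorem Reachable.exists_walk_support_subset {V : Type*} {G : SimpleGraph V} {s : Set V}
    {a b : V} {ha : a ∈ s} {hb : b ∈ s} (h : (G.induce s).Reachable ⟨a, ha⟩ ⟨b, hb⟩) :
    ∃ p : G.Walk a b, ∀ z ∈ p.support, z ∈ s := by
  obtain ⟨q⟩ := h
  refine ⟨q.map (Embedding.induce s).toHom, fun z hz => ?_⟩
  obtain ⟨z, -, rfl⟩ := List.mem_map.1 ((Walk.support_map _ q) ▸ hz)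
  exact z.2

variable {ι : Type*} {T : SimpleGraph ι} {t a b c : ι}

def ReachableAvoiding (T : SimpleGraph ι) (t a b : ι) : Prop :=
  ∃ p : T.Walk a b, t ∉ p.support

theorem Adj.reachableAvoiding (h : T.Adj a b) (ha : a ≠ t) (hb : b ≠ t) :
    T.ReachableAvoiding t a b :=
  ⟨h.toWalk, by simp [ha.symm, hb.symm]⟩

namespace ReachableAvoiding

theorem refl (ha : a ≠ t) : T.ReachableAvoiding t a a :=
  ⟨.nil, by simpa using ha.symm⟩

theorem symm (h : T.ReachableAvoiding t a b) : T.ReachableAvoiding t b a :=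
  let ⟨p, hp⟩ := h
  ⟨p.reverse, by simpa using hp⟩

theorem trans (h : T.ReachableAvoiding t a b) (h' : T.ReachableAvoiding t b c) :
    T.ReachableAvoiding t a c :=
  let ⟨p, hp⟩ := h
  let ⟨q, hq⟩ := h'
  ⟨p.append q, by simp [Walk.mem_support_append_iff, hp, hq]⟩

theorem eq_of_adj (hT : T.IsAcyclic) (ha : T.Adj t a) (hb : T.Adj t b)
    (h : T.ReachableAvoiding t a b) : a = b := by
  classical
  obtain ⟨p, hp⟩ := h
  have hpath : (Walk.cons ha p.bypass).IsPath :=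
    p.bypass_isPath.cons fun h' => hp (p.support_bypass_subset_support h')
  simpa using (hT.eq_snd_of_adj_start hpath hb (Walk.end_mem_support _)).symm

end ReachableAvoiding

end SimpleGraph

namespace TreeDecomp

section TorsoConnectivity

variable {V ι : Type} {G : SimpleGraph V} (D : TreeDecomp G ι) {t t' : ι} {x y : V}

def single (G : SimpleGraph V) : TreeDecomp G Unit where
  tree := ⊥
  isTree := .of_subsingleton
  bag _ := Set.univ
  covers_vertex _ := ⟨(), trivial⟩
  covers_edge _ _ _ := ⟨(), trivial, trivial⟩
  subtree _ := @Connected.of_subsingleton _ _ ⟨⟨(), trivial⟩⟩ _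

theorem torso_adj_of_adj {x y : D.bag t} (h : G.Adj x y) : (D.torso t).Adj x y :=
  (fromRel_adj _ _ _).2 ⟨fun e => h.ne (congrArg Subtype.val e), Or.inl (Or.inl h)⟩

theorem torso_adj_of_mem_bag (ht : D.tree.Adj t t') {x y : D.bag t} (hxy : x ≠ y)
    (hx : (x : V) ∈ D.bag t') (hy : (y : V) ∈ D.bag t') : (D.torso t).Adj x y :=
  (fromRel_adj _ _ _).2 ⟨hxy, Or.inl (Or.inr ⟨t', ht, hx, hy⟩)⟩

theorem reachableAvoiding_of_mem_bag {a b : ι} (hxt : x ∉ D.bag t) (ha : x ∈ D.bag a)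
    (hb : x ∈ D.bag b) : D.tree.ReachableAvoiding t a b := by
  obtain ⟨p, hp⟩ := ((D.subtree x).preconnected ⟨a, ha⟩ ⟨b, hb⟩).exists_walk_support_subset
  exact ⟨p, fun h => hxt (hp t h)⟩

theorem exists_adj_reachableAvoiding {s : ι} (hs : x ∈ D.bag s) (ht : x ∈ D.bag t)
    (hst : s ≠ t) : ∃ t', D.tree.Adj t t' ∧ x ∈ D.bag t' ∧ D.tree.ReachableAvoiding t s t' := by
  obtain ⟨p, hp⟩ := ((D.subtree x).preconnected ⟨s, hs⟩ ⟨t, ht⟩).exists_walk_support_subset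
  clear hs ht
  induction p with
  | nil => exact absurd rfl hst
  | @cons s m t h q ih =>
    by_cases hm : m = t
    · subst hm
      exact ⟨s, h.symm, hp s (by simp), .refl hst⟩
    · obtain ⟨t', ht', hxt', r⟩ := ih hm fun z hz => hp z (by simp [hz])
      exact ⟨t', ht', hxt', (h.reachableAvoiding hst hm).trans r⟩

theorem connected_induce_setOf_exists_mem_bag {C : Set V} (hC : (G.induce C).Connected) :
    (D.tree.induce {t | ∃ x ∈ C, x ∈ D.bag t}).Connected := by
  have reach_of_mem : ∀ x (hx : x ∈ C) {a b} (ha : x ∈ D.bag a) (hb : x ∈ D.bag b),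
      (D.tree.induce {t | ∃ x ∈ C, x ∈ D.bag t}).Reachable ⟨a, x, hx, ha⟩ ⟨b, x, hx, hb⟩ := by
    intro x hx a b ha hb
    have hsub : {t | x ∈ D.bag t} ⊆ {t | ∃ x ∈ C, x ∈ D.bag t} := fun s hs => ⟨x, hx, hs⟩
    exact ((D.subtree x).preconnected ⟨a, ha⟩ ⟨b, hb⟩).map (induceHomOfLE _ hsub).toHom
  have reach : ∀ {x y : C} (p : (G.induce C).Walk x y) {a b} (ha : ↑x ∈ D.bag a)
      (hb : ↑y ∈ D.bag b),
      (D.tree.induce {t | ∃ x ∈ C, x ∈ D.bag t}).Reachable ⟨a, x, x.2, ha⟩ ⟨b, y, y.2, hb⟩ := by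
    intro x y p
    induction p with
    | nil => exact fun ha hb => reach_of_mem _ (Subtype.property _) ha hb
    | @cons x m _ h _ ih =>
      intro a b ha hb
      obtain ⟨s, hxs, hms⟩ := D.covers_edge h
      exact (reach_of_mem _ x.2 ha hxs).trans (ih hms hb)
  obtain ⟨⟨x, hx⟩⟩ := hC.nonempty
  obtain ⟨a, ha⟩ := D.covers_vertex x
  have : Nonempty {t | ∃ x ∈ C, x ∈ D.bag t} := ⟨⟨a, x, hx, ha⟩⟩
  exact .mk fun ⟨a, x, hx, ha⟩ ⟨b, y, hy, hb⟩ =>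
    reach (hC.preconnected ⟨x, hx⟩ ⟨y, hy⟩).some ha hb

/-- `y` lies outside the bag of `t`, on the side of the tree hanging off `t` at `t'`. -/
def Behind (t t' : ι) (y : V) : Prop :=
  y ∉ D.bag t ∧ ∃ s, y ∈ D.bag s ∧ D.tree.ReachableAvoiding t s t'

variable {D}

theorem behind_of_mem_bag (ht : D.tree.Adj t t') (hy : y ∈ D.bag t') (hyt : y ∉ D.bag t) :
    D.Behind t t' y :=
  ⟨hyt, t', hy, .refl ht.ne'⟩

theorem Behind.unique {t'' : ι} (h : D.Behind t t' y) (h' : D.Behind t t'' y)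
    (ht' : D.tree.Adj t t') (ht'' : D.tree.Adj t t'') : t' = t'' := by
  obtain ⟨hyt, s, hs, r⟩ := h
  obtain ⟨-, s', hs', r'⟩ := h'
  exact r.symm.trans ((D.reachableAvoiding_of_mem_bag hyt hs hs').trans r') |>.eq_of_adj
    D.isTree.isAcyclic ht' ht''

theorem exists_behind_of_adj (hy : y ∈ D.bag t) (hx : x ∉ D.bag t) (h : G.Adj y x) :
    ∃ t', D.tree.Adj t t' ∧ y ∈ D.bag t' ∧ D.Behind t t' x := by
  obtain ⟨s, hys, hxs⟩ := D.covers_edge h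
  obtain ⟨t', ht', hyt', r⟩ :=
    D.exists_adj_reachableAvoiding hys hy fun e => hx (e ▸ hxs)
  exact ⟨t', ht', hyt', hx, s, hxs, r⟩

theorem Behind.of_adj (h : D.Behind t t' y) (hx : x ∉ D.bag t) (hadj : G.Adj y x) :
    D.Behind t t' x := by
  obtain ⟨hyt, s, hs, r⟩ := h
  obtain ⟨s', hys', hxs'⟩ := D.covers_edge hadj
  exact ⟨hx, s', hxs', (D.reachableAvoiding_of_mem_bag hyt hys' hs).trans r⟩

theorem Behind.mem_bag_of_adj (h : D.Behind t t' y) (ht' : D.tree.Adj t t')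
    (hx : x ∈ D.bag t) (hadj : G.Adj y x) : x ∈ D.bag t' := by
  obtain ⟨t'', ht'', hxt'', h''⟩ := exists_behind_of_adj hx h.1 hadj.symm
  exact h.unique h'' ht' ht'' ▸ hxt''

variable (D)

/-- Reachability from `u` inside `C`, as seen in the torso at `t`: a vertex of the bag is
reached by a torso walk within `C`; a vertex behind a neighbour `t'` is reached through a
vertex of the adhesion with `t'`. -/
def TorsoReach (t : ι) (C : Set V) (u : (Subtype.val ⁻¹' C : Set (D.bag t))) (y : V) : Prop :=
  (∃ (hy : y ∈ D.bag t) (hyC : y ∈ C),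
      ((D.torso t).induce (Subtype.val ⁻¹' C)).Reachable u ⟨⟨y, hy⟩, hyC⟩) ∨
    ∃ t', D.tree.Adj t t' ∧ D.Behind t t' y ∧
      ∃ v : (Subtype.val ⁻¹' C : Set (D.bag t)), v.1.1 ∈ D.bag t' ∧
        ((D.torso t).induce (Subtype.val ⁻¹' C)).Reachable u v

variable {D} {C : Set V} {u : (Subtype.val ⁻¹' C : Set (D.bag t))}

theorem TorsoReach.of_adj (h : D.TorsoReach t C u y) (hadj : G.Adj y x) (hxC : x ∈ C) :
    D.TorsoReach t C u x := by
  by_cases hx : x ∈ D.bag t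
  · refine .inl ⟨hx, hxC, ?_⟩
    rcases h with ⟨hy, hyC, r⟩ | ⟨t', ht', hb, v, hv, r⟩
    · have hyx : (D.torso t).Adj ⟨y, hy⟩ ⟨x, hx⟩ := D.torso_adj_of_adj hadj
      exact r.trans (induce_adj.2 hyx).reachable
    · by_cases hvx : v = ⟨⟨x, hx⟩, hxC⟩
      · exact hvx ▸ r
      · have hvx' := D.torso_adj_of_mem_bag ht' (fun e => hvx (Subtype.ext e)) hv
          (hb.mem_bag_of_adj ht' hx hadj)
        exact r.trans (induce_adj.2 hvx').reachable
  · refine .inr ?_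
    rcases h with ⟨hy, hyC, r⟩ | ⟨t', ht', hb, v, hv, r⟩
    · obtain ⟨t', ht', hyt', hb⟩ := exists_behind_of_adj hy hx hadj
      exact ⟨t', ht', hb, _, hyt', r⟩
    · exact ⟨t', ht', hb.of_adj hx hadj, v, hv, r⟩

theorem TorsoReach.of_walk {x y : C} (p : (G.induce C).Walk x y) (hx : D.TorsoReach t C u x) :
    D.TorsoReach t C u y := by
  induction p with
  | nil => exact hx
  | cons h _ ih => exact ih (hx.of_adj h (Subtype.property _))

theorem torsoReach_of_connected (hC : (G.induce C).Connected) (y : C) :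
    D.TorsoReach t C u y :=
  TorsoReach.of_walk (hC.preconnected ⟨u.1.1, u.2⟩ y).some (.inl ⟨u.1.2, u.2, .refl _⟩)

variable (D)

theorem connected_torso_induce (hC : (G.induce C).Connected) (hCt : ∃ x ∈ C, x ∈ D.bag t) :
    ((D.torso t).induce (Subtype.val ⁻¹' C)).Connected := by
  obtain ⟨x, hxC, hxt⟩ := hCt
  let u : (Subtype.val ⁻¹' C : Set (D.bag t)) := ⟨⟨x, hxt⟩, hxC⟩
  have : Nonempty (Subtype.val ⁻¹' C : Set (D.bag t)) := ⟨u⟩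
  refine (connected_iff_exists_forall_reachable _).2 ⟨u, fun ⟨⟨y, hyt⟩, hyC⟩ => ?_⟩
  rcases torsoReach_of_connected (u := u) hC ⟨y, hyC⟩ with ⟨_, _, r⟩ | ⟨_, _, hb, _⟩
  · exact r
  · exact absurd hyt hb.1

theorem exists_mem_adhesion (hC : (G.induce C).Connected) (ht' : D.tree.Adj t t')
    (hCt : ∃ x ∈ C, x ∈ D.bag t) (hCt' : ∃ y ∈ C, y ∈ D.bag t') :
    ∃ z ∈ C, z ∈ D.bag t ∧ z ∈ D.bag t' := by
  obtain ⟨x, hxC, hxt⟩ := hCt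
  obtain ⟨y, hyC, hyt'⟩ := hCt'
  by_cases hyt : y ∈ D.bag t
  · exact ⟨y, hyC, hyt, hyt'⟩
  rcases torsoReach_of_connected (D := D) (u := ⟨⟨x, hxt⟩, hxC⟩) hC ⟨y, hyC⟩ with
    ⟨hy, -⟩ | ⟨t'', ht'', hb, v, hv, -⟩
  · exact absurd hy hyt
  · obtain rfl := (behind_of_mem_bag ht' hyt' hyt).unique hb ht' ht''
    exact ⟨v.1.1, v.2, v.1.2, hv⟩

end TorsoConnectivity

section Lift

variable {V W ι : Type} {G : SimpleGraph V} {H : SimpleGraph W} (D : TreeDecomp G ι)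
  (M : MinorModel H G)

def lift : TreeDecomp H ι where
  tree := D.tree
  isTree := D.isTree
  bag t := {w | ∃ x ∈ M.branch w, x ∈ D.bag t}
  covers_vertex w :=
    let ⟨x, hx⟩ := M.nonempty w
    let ⟨t, ht⟩ := D.covers_vertex x
    ⟨t, x, hx, ht⟩
  covers_edge w w' h :=
    let ⟨x, hx, y, hy, hxy⟩ := M.exists_adj w w' h
    let ⟨t, hxt, hyt⟩ := D.covers_edge hxy
    ⟨t, ⟨x, hx, hxt⟩, y, hy, hyt⟩
  subtree w := D.connected_induce_setOf_exists_mem_bag (M.connected w)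

variable {D M} {t : ι} {w w' : (D.lift M).bag t}

theorem exists_torso_adj_of_adj (h : H.Adj w w') :
    ∃ x ∈ Subtype.val ⁻¹' M.branch w, ∃ y ∈ Subtype.val ⁻¹' M.branch w', (D.torso t).Adj x y := by
  obtain ⟨x, hx, y, hy, hxy⟩ := M.exists_adj _ _ h
  have hC := connected_induce_union (M.connected w).preconnected (M.connected w').preconnected
    hx hy hxy
  obtain ⟨a, haw, hat⟩ := w.2
  obtain ⟨b, hbw', hbt⟩ := w'.2
  obtain ⟨p⟩ := (D.connected_torso_induce hC ⟨a, .inl haw, hat⟩).preconnected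
    ⟨⟨a, hat⟩, .inl haw⟩ ⟨⟨b, hbt⟩, .inr hbw'⟩
  obtain ⟨d, -, hd, hd'⟩ := p.exists_boundary_dart {z | z.1.1 ∈ M.branch w} haw
    (Set.disjoint_right.1 (M.disjoint _ _ h.ne) hbw')
  exact ⟨d.fst.1, hd, d.snd.1, d.snd.2.resolve_left hd', d.adj⟩

theorem exists_torso_adj_of_mem_bag {t' : ι} (hww' : w ≠ w') (ht' : D.tree.Adj t t')
    (hw : ↑w ∈ (D.lift M).bag t') (hw' : ↑w' ∈ (D.lift M).bag t') :
    ∃ x ∈ Subtype.val ⁻¹' M.branch w, ∃ y ∈ Subtype.val ⁻¹' M.branch w', (D.torso t).Adj x y := by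
  obtain ⟨x, hx, hxt, hxt'⟩ := D.exists_mem_adhesion (M.connected w) ht' w.2 hw
  obtain ⟨y, hy, hyt, hyt'⟩ := D.exists_mem_adhesion (M.connected w') ht' w'.2 hw'
  have hxy : x ≠ y := fun e =>
    Set.disjoint_left.1 (M.disjoint _ _ (Subtype.coe_injective.ne hww')) hx (e ▸ hy)
  exact ⟨⟨x, hxt⟩, hx, ⟨y, hyt⟩, hy,
    D.torso_adj_of_mem_bag ht' (fun e => hxy (congrArg Subtype.val e)) hxt' hyt'⟩

theorem exists_torso_adj_of_torso_lift_adj (h : ((D.lift M).torso t).Adj w w') :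
    ∃ x ∈ Subtype.val ⁻¹' M.branch w, ∃ y ∈ Subtype.val ⁻¹' M.branch w', (D.torso t).Adj x y := by
  obtain ⟨hne, (h | ⟨t', ht', hw, hw'⟩) | (h | ⟨t', ht', hw', hw⟩)⟩ := (fromRel_adj _ _ _).1 h
  · exact exists_torso_adj_of_adj h
  · exact exists_torso_adj_of_mem_bag hne ht' hw hw'
  · obtain ⟨y, hy, x, hx, hyx⟩ := exists_torso_adj_of_adj h
    exact ⟨x, hx, y, hy, hyx.symm⟩
  · exact exists_torso_adj_of_mem_bag hne ht' hw hw'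

variable (D M t)

def torsoMinorModel : MinorModel ((D.lift M).torso t) (D.torso t) where
  branch w := Subtype.val ⁻¹' M.branch w
  nonempty w := let ⟨x, hx, hxt⟩ := w.2; ⟨⟨x, hxt⟩, hx⟩
  connected w := D.connected_torso_induce (M.connected w) w.2
  disjoint w w' h := (M.disjoint w w' (Subtype.coe_injective.ne h)).preimage Subtype.val
  exists_adj _ _ := exists_torso_adj_of_torso_lift_adj

end Lift

end TreeDecomp

theorem cliqueSumExt_le {p : GraphParam} {V ι : Type} {G : SimpleGraph V} (D : TreeDecomp G ι)
    {k : ℕ} (h : ∀ t, p (D.torso t) ≤ k) : cliqueSumExt p G ≤ k :=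
  Nat.sInf_le ⟨ι, D, h⟩

theorem exists_treeDecomp_torso_le_cliqueSumExt (p : GraphParam) {V : Type} (G : SimpleGraph V) :
    ∃ (ι : Type) (D : TreeDecomp G ι), ∀ t, p (D.torso t) ≤ cliqueSumExt p G :=
  Nat.sInf_mem (s := {k | ∃ (ι : Type) (D : TreeDecomp G ι), ∀ t, p (D.torso t) ≤ k})
    ⟨p ((TreeDecomp.single G).torso ()), Unit, .single G, fun () => le_rfl⟩

/-- the clique-sum extension of a minor-monotone graph parameter is
minor-monotone. -/
theorem cliqueSumExt_minorMonotone (p : GraphParam) (hp : MinorMonotone p) :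
    MinorMonotone (cliqueSumExt p) := by
  intro V W G H hHG
  obtain ⟨M⟩ := isGraphMinor_iff_nonempty_minorModel.1 hHG
  obtain ⟨ι, D, hD⟩ := exists_treeDecomp_torso_le_cliqueSumExt p G
  refine cliqueSumExt_le (D.lift M) fun t => (hp _ _ ?_).trans (hD t)
  exact isGraphMinor_iff_nonempty_minorModel.2 ⟨D.torsoMinorModel M t⟩
end

section
/- Let G be a graph, k ≥ 1, and let X ⊆ V(G) be a (k, α)-well-linked set for some α ∈ [2/3, 1). Then the set T_X = {(A, B) : (A, B) a separation of G of order at most k with |X ∩ B| > α|X|} is a tangle of order k + 1 in G. -/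
/-- A separation of `G`: a pair of sets covering the vertices with no edge between the
two strict sides. -/
def IsSeparation {V : Type*} (G : SimpleGraph V) (A B : Set V) : Prop :=
  A ∪ B = Set.univ ∧ ∀ u ∈ A \ B, ∀ v ∈ B \ A, ¬ G.Adj u v

/-- The order of a separation `(A, B)`. -/
noncomputable def sepOrder {V : Type*} (A B : Set V) : ℕ := (A ∩ B).ncard

/-- `T` is a tangle of order `k` in `G`: an orientation of all separations of order
less than `k` such that no three small sides cover all of `G`. -/
def IsTangle {V : Type*} (G : SimpleGraph V) (k : ℕ) (T : Set (Set V × Set V)) : Prop :=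
  (∀ p ∈ T, IsSeparation G p.1 p.2 ∧ sepOrder p.1 p.2 < k) ∧
  (∀ A B : Set V, IsSeparation G A B → sepOrder A B < k → (((A, B) ∈ T) ↔ ((B, A) ∉ T))) ∧
  (∀ p₁ ∈ T, ∀ p₂ ∈ T, ∀ p₃ ∈ T,
    (p₁ : Set V × Set V).1 ∪ (p₂ : Set V × Set V).1 ∪ (p₃ : Set V × Set V).1 ≠ Set.univ)

/-- `S` is an `α`-balanced separator for `X` in `G`: every connected subset of the
complement of `S` (in particular, every component of `G - S`) contains at most `α|X|`
vertices of `X`. -/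
def IsBalancedSeparator {V : Type*} (G : SimpleGraph V) (α : ℝ) (X S : Set V) : Prop :=
  ∀ C : Set V, C ⊆ Sᶜ → (G.induce C).Connected → ((C ∩ X).ncard : ℝ) ≤ α * X.ncard

/-- `X` is `(k, α)`-well-linked in `G`: there is no `α`-balanced separator for `X`
of size at most `k`. -/
def WellLinked {V : Type*} (G : SimpleGraph V) (k : ℕ) (α : ℝ) (X : Set V) : Prop :=
  ¬ ∃ S : Set V, S.ncard ≤ k ∧ IsBalancedSeparator G α X S

/-- Along a walk from a vertex satisfying `P` to one not satisfying `P`, there is an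
edge crossing the boundary. -/
lemma exists_boundary_edge {V : Type*} {G : SimpleGraph V} (P : V → Prop) :
    ∀ {u v : V}, G.Walk u v → P u → ¬ P v → ∃ a b, G.Adj a b ∧ P a ∧ ¬ P b := by
  intro u v w
  induction w with
  | nil => intro h h'; exact absurd h h'
  | @cons a b c hab w ih =>
    intro hu hv
    by_cases hb : P b
    · exact ih hb hv
    · exact ⟨a, b, hab, hu, hb⟩

/-- A connected set avoiding the separator of a separation lies in one strict side. -/
lemma connected_subset_side {V : Type*} (G : SimpleGraph V) {A B C : Set V}
    (hsep : IsSeparation G A B) (hC : C ⊆ (A ∩ B)ᶜ) (hconn : (G.induce C).Connected) :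
    C ⊆ A \ B ∨ C ⊆ B \ A := by
  obtain ⟨hcov, hadj⟩ := hsep
  have hside : ∀ x ∈ C, (x ∈ A \ B) ∨ (x ∈ B \ A) := by
    intro x hx
    have hxu : x ∈ A ∪ B := hcov ▸ Set.mem_univ x
    have hxn : x ∉ A ∩ B := hC hx
    rcases hxu with h | h
    · exact Or.inl ⟨h, fun hb => hxn ⟨h, hb⟩⟩
    · by_cases ha : x ∈ A
      · exact absurd ⟨ha, h⟩ hxn
      · exact Or.inr ⟨h, ha⟩
  by_contra hcon
  push_neg at hcon
  obtain ⟨h1, h2⟩ := hcon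
  obtain ⟨u, huC, hu⟩ := Set.not_subset.mp h1
  obtain ⟨v, hvC, hv⟩ := Set.not_subset.mp h2
  have huB : u ∈ B \ A := (hside u huC).resolve_left hu
  have hvA : v ∈ A \ B := (hside v hvC).resolve_right hv
  obtain ⟨w⟩ := hconn.preconnected ⟨v, hvC⟩ ⟨u, huC⟩
  obtain ⟨a, b, hab, ha, hb⟩ :=
    exists_boundary_edge (G := G.induce C) (fun x => (x : V) ∈ A) w hvA.1 huB.2
  have haAB : (a : V) ∈ A \ B := (hside a a.2).resolve_right (fun h => h.2 ha)
  have hbBA : (b : V) ∈ B \ A := (hside b b.2).resolve_left (fun h => hb h.1)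
  exact hadj _ haAB _ hbBA hab

/-- Two disjoint subsets of a finite set `X` cannot both contain more than `α|X|`
elements when `α ≥ 2/3`. -/
lemma not_both_big {V : Type} [Fintype V] {X s t : Set V} {α : ℝ} (hα : 2 / 3 ≤ α)
    (hs : s ⊆ X) (ht : t ⊆ X) (hdisj : Disjoint s t)
    (hs' : α * X.ncard < s.ncard) (ht' : α * X.ncard < t.ncard) : False := by
  have h1 : (s ∪ t).ncard = s.ncard + t.ncard := Set.ncard_union_eq hdisj
  have h2 : (s ∪ t).ncard ≤ X.ncard := Set.ncard_le_ncard (Set.union_subset hs ht) X.toFinite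
  have h3 : (s.ncard : ℝ) + t.ncard ≤ X.ncard := by exact_mod_cast h1 ▸ h2
  have hX0 : (0 : ℝ) ≤ X.ncard := Nat.cast_nonneg _
  nlinarith

/-- Three subsets of `X` each with more than `α|X| ≥ (2/3)|X|` elements intersect. -/
lemma triple_inter_nonempty {V : Type} [Fintype V] {X s₁ s₂ s₃ : Set V} {α : ℝ}
    (hα : 2 / 3 ≤ α) (h1 : s₁ ⊆ X) (h2 : s₂ ⊆ X) (h3 : s₃ ⊆ X)
    (hb1 : α * X.ncard < s₁.ncard) (hb2 : α * X.ncard < s₂.ncard)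
    (hb3 : α * X.ncard < s₃.ncard) : (s₁ ∩ s₂ ∩ s₃).Nonempty := by
  have e12 : (s₁ ∩ s₂).ncard + (s₁ ∪ s₂).ncard = s₁.ncard + s₂.ncard :=
    Set.ncard_inter_add_ncard_union s₁ s₂
  have u12 : (s₁ ∪ s₂).ncard ≤ X.ncard :=
    Set.ncard_le_ncard (Set.union_subset h1 h2) X.toFinite
  have e123 : (s₁ ∩ s₂ ∩ s₃).ncard + (s₁ ∩ s₂ ∪ s₃).ncard
      = (s₁ ∩ s₂).ncard + s₃.ncard := Set.ncard_inter_add_ncard_union _ s₃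
  have u123 : (s₁ ∩ s₂ ∪ s₃).ncard ≤ X.ncard :=
    Set.ncard_le_ncard (Set.union_subset (fun x hx => h1 hx.1) h3) X.toFinite
  have hX0 : (0 : ℝ) ≤ X.ncard := Nat.cast_nonneg _
  have r12 : ((s₁ ∩ s₂).ncard : ℝ) + (s₁ ∪ s₂).ncard = s₁.ncard + s₂.ncard := by
    exact_mod_cast e12
  have ru12 : ((s₁ ∪ s₂).ncard : ℝ) ≤ X.ncard := by exact_mod_cast u12
  have r123 : ((s₁ ∩ s₂ ∩ s₃).ncard : ℝ) + (s₁ ∩ s₂ ∪ s₃).ncard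
      = (s₁ ∩ s₂).ncard + s₃.ncard := by exact_mod_cast e123
  have ru123 : ((s₁ ∩ s₂ ∪ s₃).ncard : ℝ) ≤ X.ncard := by exact_mod_cast u123
  have hpos : (0 : ℝ) < (s₁ ∩ s₂ ∩ s₃).ncard := by nlinarith
  have : (s₁ ∩ s₂ ∩ s₃).ncard ≠ 0 := by exact_mod_cast hpos.ne'
  exact Set.nonempty_of_ncard_ne_zero this

/-- if `X` is a `(k, α)`-well-linked set in `G` with `k ≥ 1` and
`α ∈ [2/3, 1)`, then `T_X = {(A, B) : (A,B) a separation of order ≤ k with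
`|X ∩ B| > α|X|}` is a tangle of order `k + 1` in `G`. -/
theorem wellLinked_gives_tangle {V : Type} [Fintype V] (G : SimpleGraph V)
    (k : ℕ) (hk : 1 ≤ k) (α : ℝ) (hα₁ : 2 / 3 ≤ α) (hα₂ : α < 1)
    (X : Set V) (hX : WellLinked G k α X) :
    IsTangle G (k + 1)
      {p : Set V × Set V | IsSeparation G p.1 p.2 ∧ sepOrder p.1 p.2 ≤ k ∧
        α * (X.ncard : ℝ) < ((X ∩ p.2).ncard : ℝ)} := by
  set T : Set (Set V × Set V) :=
    {p : Set V × Set V | IsSeparation G p.1 p.2 ∧ sepOrder p.1 p.2 ≤ k ∧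
      α * (X.ncard : ℝ) < ((X ∩ p.2).ncard : ℝ)} with hT
  -- key: for every separation of order ≤ k there is a big connected set in a strict side
  have key : ∀ A B : Set V, IsSeparation G A B → sepOrder A B ≤ k →
      ∃ C : Set V, α * (X.ncard : ℝ) < ((X ∩ C).ncard : ℝ) ∧ (C ⊆ A \ B ∨ C ⊆ B \ A) := by
    intro A B hsep hord
    have hnb : ¬ IsBalancedSeparator G α X (A ∩ B) := fun h => hX ⟨A ∩ B, hord, h⟩
    rw [IsBalancedSeparator] at hnb
    push_neg at hnb
    obtain ⟨C, hC1, hC2, hC3⟩ := hnb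
    exact ⟨C, by rwa [Set.inter_comm], connected_subset_side G hsep hC1 hC2⟩
  -- big sets in a strict side are disjoint from the other side's intersection with X
  have disjX : ∀ {C A B : Set V}, C ⊆ A \ B → Disjoint (X ∩ C) (X ∩ B) :=
    fun hsub => Set.disjoint_left.mpr fun x hx1 hx2 => (hsub hx1.2).2 hx2.2
  refine ⟨?_, ?_, ?_⟩
  · exact fun p hp => ⟨hp.1, Nat.lt_succ_of_le hp.2.1⟩
  · intro A B hsep hord
    have hord' : sepOrder A B ≤ k := Nat.lt_succ_iff.mp hord
    have hsepBA : IsSeparation G B A :=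
      ⟨by rw [Set.union_comm]; exact hsep.1, fun u hu v hv h => hsep.2 v hv u hu h.symm⟩
    have hordBA : sepOrder B A ≤ k := by
      rw [sepOrder, Set.inter_comm]; exact hord'
    obtain ⟨C, hbig, hside⟩ := key A B hsep hord'
    rcases hside with hsub | hsub
    · -- C ⊆ A \ B : (B, A) ∈ T and (A, B) ∉ T
      have hinA : α * (X.ncard : ℝ) < ((X ∩ A).ncard : ℝ) := by
        refine lt_of_lt_of_le hbig ?_
        exact_mod_cast Set.ncard_le_ncard
          (Set.inter_subset_inter_right X (fun x hx => (hsub hx).1)) (X ∩ A).toFinite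
      have hBA : (B, A) ∈ T := ⟨hsepBA, hordBA, hinA⟩
      have hAB : (A, B) ∉ T := fun h =>
        not_both_big hα₁ Set.inter_subset_left Set.inter_subset_left (disjX hsub) hbig h.2.2
      exact iff_of_false hAB (not_not_intro hBA)
    · -- C ⊆ B \ A : (A, B) ∈ T and (B, A) ∉ T
      have hinB : α * (X.ncard : ℝ) < ((X ∩ B).ncard : ℝ) := by
        refine lt_of_lt_of_le hbig ?_
        exact_mod_cast Set.ncard_le_ncard
          (Set.inter_subset_inter_right X (fun x hx => (hsub hx).1)) (X ∩ B).toFinite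
      have hAB : (A, B) ∈ T := ⟨hsep, hord', hinB⟩
      have hBA : (B, A) ∉ T := fun h =>
        not_both_big hα₁ Set.inter_subset_left Set.inter_subset_left (disjX hsub) hbig h.2.2
      exact iff_of_true hAB hBA
  · -- no three small sides cover everything
    have getC : ∀ p ∈ T, ∃ C : Set V,
        α * (X.ncard : ℝ) < ((X ∩ C).ncard : ℝ) ∧ C ⊆ p.2 \ p.1 := by
      intro p hp
      obtain ⟨hsep, hord, hbig⟩ := hp
      obtain ⟨C, hC, hside⟩ := key p.1 p.2 hsep hord
      refine ⟨C, hC, hside.resolve_left fun hsub => ?_⟩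
      exact not_both_big hα₁ Set.inter_subset_left Set.inter_subset_left (disjX hsub) hC hbig
    intro p₁ h₁ p₂ h₂ p₃ h₃ hcover
    obtain ⟨C₁, hb₁, hs₁⟩ := getC p₁ h₁
    obtain ⟨C₂, hb₂, hs₂⟩ := getC p₂ h₂
    obtain ⟨C₃, hb₃, hs₃⟩ := getC p₃ h₃
    obtain ⟨x, hx⟩ := triple_inter_nonempty hα₁
      (Set.inter_subset_left (s := X) (t := C₁))
      (Set.inter_subset_left (s := X) (t := C₂))
      (Set.inter_subset_left (s := X) (t := C₃)) hb₁ hb₂ hb₃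
    have hx1 : x ∉ p₁.1 := (hs₁ hx.1.1.2).2
    have hx2 : x ∉ p₂.1 := (hs₂ hx.1.2.2).2
    have hx3 : x ∉ p₃.1 := (hs₃ hx.2.2).2
    have : x ∈ p₁.1 ∪ p₂.1 ∪ p₃.1 := hcover ▸ Set.mem_univ x
    rcases this with (h | h) | h
    · exact hx1 h
    · exact hx2 h
    · exact hx3 h
end

section
/- Every society (G, Ω) that admits a linear decomposition of adhesion at most d has depth at most 2d; that is, every transaction in (G, Ω) has at most 2d paths. -/
/-- The cyclic interval of `Fin ℓ` starting at `a` and of length `n`. -/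
def cyclicInterval (ℓ : ℕ) (a : Fin ℓ) (n : ℕ) : Set (Fin ℓ) :=
  {i | ∃ j < n, (i : ℕ) = ((a : ℕ) + j) % ℓ}

/-- A segment of the cyclic order on `Fin ℓ`. -/
def IsSegment (ℓ : ℕ) (S : Set (Fin ℓ)) : Prop :=
  ∃ (a : Fin ℓ) (n : ℕ), n ≤ ℓ ∧ S = cyclicInterval ℓ a n

/-- The position of `i` in the cyclic order of `Fin ℓ`, relative to the starting point `a`. -/
def relPos {ℓ : ℕ} (a i : Fin ℓ) : ℕ := ((i : ℕ) + ℓ - (a : ℕ)) % ℓ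

/-- A transaction of order `t` in the society `(G, ω)`, where `ω : Fin ℓ → V` enumerates
the society vertices in their cyclic order: a linkage of `t` pairwise vertex-disjoint
`A`–`B`-paths for two disjoint segments `A`, `B` of the cyclic order, each path meeting
the society vertices only in its endpoints. -/
structure Transaction {V : Type} (G : SimpleGraph V) {ℓ : ℕ} (ω : Fin ℓ → V) (t : ℕ) where
  A : Set (Fin ℓ)
  B : Set (Fin ℓ)
  segA : IsSegment ℓ A
  segB : IsSegment ℓ B
  disjAB : Disjoint A B
  src : Fin t → Fin ℓ
  tgt : Fin t → Fin ℓ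
  src_mem : ∀ i, src i ∈ A
  tgt_mem : ∀ i, tgt i ∈ B
  walk : ∀ i, G.Walk (ω (src i)) (ω (tgt i))
  isPath : ∀ i, (walk i).IsPath
  internal : ∀ i, ∀ x ∈ (walk i).support,
    (∃ j ∈ A ∪ B, ω j = x) → x = ω (src i) ∨ x = ω (tgt i)
  disjointPaths : ∀ i j, i ≠ j → ∀ x, x ∈ (walk i).support → x ∉ (walk j).support

/-- A linear decomposition of the society `(G, ω)`: bags `X i` indexed by the society
vertices in cyclic order, covering all vertices and edges, with `ω i ∈ X i`, and such
that the indices of the bags containing any fixed vertex form an interval. -/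
structure LinearDecomp {V : Type} (G : SimpleGraph V) {ℓ : ℕ} (ω : Fin ℓ → V) where
  X : Fin ℓ → Set V
  mem_bag : ∀ i, ω i ∈ X i
  covers : ∀ v : V, ∃ i, v ∈ X i
  covers_edge : ∀ ⦃u v : V⦄, G.Adj u v → ∃ i, u ∈ X i ∧ v ∈ X i
  interval : ∀ x : V, ∀ i j k : Fin ℓ, i ≤ j → j ≤ k → x ∈ X i → x ∈ X k → x ∈ X j

/-! The segment `A` of a transaction is separated from its complement by two cuts of the linear
order `1, …, ℓ`: one just before `A` and one just after it. Each path of the transaction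
runs from `A` to `B ⊆ Aᶜ`, so it crosses one of these cuts, and a walk crossing the cut between
positions `p` and `p + 1` of a linear decomposition must pass through the adhesion set
`X p ∩ X (p + 1)`, which has at most `d` vertices. The paths being disjoint, there are at most
`2d` of them. -/

/-- `i` and `j` lie on different sides of the cut between positions `p` and `p + 1`. -/
def Straddles {ℓ : ℕ} (p : ℕ) (i j : Fin ℓ) : Prop :=
  ((i : ℕ) ≤ p ∧ p < (j : ℕ)) ∨ ((j : ℕ) ≤ p ∧ p < (i : ℕ))

lemma mem_cyclicInterval_iff {ℓ : ℕ} {a : Fin ℓ} {m : ℕ} (hm : m ≤ ℓ) {i : Fin ℓ} :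
    i ∈ cyclicInterval ℓ a m ↔
      ((a : ℕ) ≤ i ∧ (i : ℕ) < a + m) ∨ (i : ℕ) + ℓ < a + m := by
  have ha := a.isLt
  have hi := i.isLt
  constructor
  · rintro ⟨j, hj, hij⟩
    rcases Nat.lt_or_ge ((a : ℕ) + j) ℓ with h | h
    · rw [Nat.mod_eq_of_lt h] at hij; omega
    · rw [Nat.mod_eq_sub_mod h, Nat.mod_eq_of_lt (by omega)] at hij; omega
  · rintro (⟨h1, h2⟩ | h)
    · exact ⟨i - a, by omega, by rw [Nat.add_sub_cancel' h1, Nat.mod_eq_of_lt hi]⟩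
    · refine ⟨i + ℓ - a, by omega, ?_⟩
      rw [show (a : ℕ) + (i + ℓ - a) = i + ℓ by omega, Nat.add_mod_right, Nat.mod_eq_of_lt hi]

/-- The two cuts are the one just before the first position of the segment and the one just
after its last position. -/
lemma IsSegment.exists_cuts {ℓ : ℕ} {S : Set (Fin ℓ)} (hS : IsSegment ℓ S) :
    ∃ p q : ℕ, ∀ i ∈ S, ∀ j ∉ S, Straddles p i j ∨ Straddles q i j := by
  obtain ⟨a, m, hm, rfl⟩ := hS
  refine ⟨a - 1, (a + m - 1) % ℓ, fun i hi j hj => ?_⟩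
  rw [mem_cyclicInterval_iff hm] at hi hj
  have := a.isLt
  have := j.isLt
  rcases Nat.lt_or_ge (a + m - 1) ℓ with h | h
  · rw [Nat.mod_eq_of_lt h]
    unfold Straddles; omega
  · rw [Nat.mod_eq_sub_mod h, Nat.mod_eq_of_lt (by omega)]
    unfold Straddles; omega

namespace LinearDecomp

variable {V : Type} {G : SimpleGraph V} {ℓ : ℕ} {ω : Fin ℓ → V}

/-- The adhesion set `X p ∩ X (p + 1)` of the cut after position `p`; it is empty when there is
no such cut, i.e. when `p + 1 ≥ ℓ`. -/
def adhesion (D : LinearDecomp G ω) (p : ℕ) : Set V :=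
  {x | ∃ h : p + 1 < ℓ, x ∈ D.X ⟨p, by omega⟩ ∩ D.X ⟨p + 1, h⟩}

lemma ncard_adhesion_le [Finite V] (D : LinearDecomp G ω) {d : ℕ}
    (hadh : ∀ i : Fin ℓ, ∀ h : (i : ℕ) + 1 < ℓ, ((D.X i) ∩ D.X ⟨(i : ℕ) + 1, h⟩).ncard ≤ d)
    (p : ℕ) : (D.adhesion p).ncard ≤ d := by
  by_cases hp : p + 1 < ℓ
  · refine le_trans (Set.ncard_le_ncard ?_) (hadh ⟨p, by omega⟩ hp)
    rintro x ⟨_, hx⟩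
    exact hx
  · convert Nat.zero_le d
    simp [adhesion, hp]

lemma mem_adhesion_of_mem_of_mem (D : LinearDecomp G ω) {x : V} {p : ℕ} {i k : Fin ℓ}
    (hip : (i : ℕ) ≤ p) (hpk : p < (k : ℕ)) (hi : x ∈ D.X i) (hk : x ∈ D.X k) :
    x ∈ D.adhesion p :=
  ⟨by omega, D.interval x i _ k (Fin.mk_le_mk.mpr hip) (Fin.le_def.mpr hpk.le) hi hk,
    D.interval x i _ k (Fin.le_def.mpr (by simp; omega)) (Fin.le_def.mpr hpk) hi hk⟩

/-- A walk from a bag left of a cut to a bag right of it passes through the adhesion set of the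
cut: the first edge covered by a bag right of the cut has its tail in both. -/
lemma exists_mem_support_adhesion_of_le_of_lt (D : LinearDecomp G ω) {p : ℕ} {u v : V}
    (w : G.Walk u v) {i j : Fin ℓ} (hip : (i : ℕ) ≤ p) (hpj : p < (j : ℕ))
    (hu : u ∈ D.X i) (hv : v ∈ D.X j) : ∃ x ∈ w.support, x ∈ D.adhesion p := by
  induction w generalizing i with
  | nil => exact ⟨_, SimpleGraph.Walk.start_mem_support _, D.mem_adhesion_of_mem_of_mem hip hpj hu hv⟩
  | @cons x y z hxy w ih =>
    obtain ⟨k, hxk, hyk⟩ := D.covers_edge hxy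
    rcases le_or_gt (k : ℕ) p with hkp | hpk
    · obtain ⟨c, hc, hcp⟩ := ih hkp hyk hv
      exact ⟨c, SimpleGraph.Walk.support_cons _ _ ▸ List.mem_cons_of_mem _ hc, hcp⟩
    · exact ⟨x, SimpleGraph.Walk.start_mem_support _,
        D.mem_adhesion_of_mem_of_mem hip hpk hu hxk⟩

lemma exists_mem_support_adhesion (D : LinearDecomp G ω) {p : ℕ} {i j : Fin ℓ}
    (hij : Straddles p i j) {u v : V} (w : G.Walk u v) (hu : u ∈ D.X i) (hv : v ∈ D.X j) :
    ∃ x ∈ w.support, x ∈ D.adhesion p := by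
  rcases hij with ⟨hip, hpj⟩ | ⟨hjp, hpi⟩
  · exact D.exists_mem_support_adhesion_of_le_of_lt w hip hpj hu hv
  · obtain ⟨x, hx, hxp⟩ := D.exists_mem_support_adhesion_of_le_of_lt w.reverse hjp hpi hv hu
    exact ⟨x, by simpa using hx, hxp⟩

end LinearDecomp

lemma natCard_le_ncard_of_pairwise_disjoint {α ι : Type*} {S : Set α} (hS : S.Finite)
    {P : ι → Set α} (hP : Pairwise fun i j => Disjoint (P i) (P j)) (hmeet : ∀ i, (P i ∩ S).Nonempty) :
    Nat.card ι ≤ S.ncard := by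
  choose f hfP hfS using hmeet
  rw [← Set.ncard_univ]
  refine Set.ncard_le_ncard_of_injOn f (fun i _ => hfS i) (fun i _ j _ hij => ?_) hS
  by_contra hne
  exact Set.disjoint_left.mp (hP hne) (hfP i) (hij ▸ hfP j)

theorem depth_le_of_linearDecomp_general {V : Type} [Fintype V] (G : SimpleGraph V)
    (ℓ : ℕ) (ω : Fin ℓ → V)
    (D : LinearDecomp G ω) (d : ℕ)
    (hadh : ∀ i : Fin ℓ, ∀ h : (i : ℕ) + 1 < ℓ,
      ((D.X i) ∩ D.X ⟨(i : ℕ) + 1, h⟩).ncard ≤ d)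
    (t : ℕ) (T : Transaction G ω t) : t ≤ 2 * d := by
  obtain ⟨p, q, hcut⟩ := T.segA.exists_cuts
  have hmeet : ∀ i, ({x | x ∈ (T.walk i).support} ∩ (D.adhesion p ∪ D.adhesion q)).Nonempty := by
    intro i
    have htgt : T.tgt i ∉ T.A := Set.disjoint_right.mp T.disjAB (T.tgt_mem i)
    rcases hcut _ (T.src_mem i) _ htgt with h | h
    · obtain ⟨x, hx, hxp⟩ := D.exists_mem_support_adhesion h (T.walk i) (D.mem_bag _) (D.mem_bag _)
      exact ⟨x, hx, Or.inl hxp⟩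
    · obtain ⟨x, hx, hxq⟩ := D.exists_mem_support_adhesion h (T.walk i) (D.mem_bag _) (D.mem_bag _)
      exact ⟨x, hx, Or.inr hxq⟩
  have hdisj : Pairwise fun i j =>
      Disjoint {x | x ∈ (T.walk i).support} {x | x ∈ (T.walk j).support} :=
    fun i j hij => Set.disjoint_left.mpr (T.disjointPaths i j hij)
  calc t = Nat.card (Fin t) := (Nat.card_fin t).symm
    _ ≤ (D.adhesion p ∪ D.adhesion q).ncard :=
      natCard_le_ncard_of_pairwise_disjoint (Set.toFinite _) hdisj hmeet
    _ ≤ (D.adhesion p).ncard + (D.adhesion q).ncard := Set.ncard_union_le _ _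
    _ ≤ d + d := add_le_add (D.ncard_adhesion_le hadh p) (D.ncard_adhesion_le hadh q)
    _ = 2 * d := (two_mul d).symm

/-- a society admitting a linear decomposition of adhesion at most `d`
has depth at most `2d`: every transaction has at most `2d` paths. -/
theorem depth_le_of_linearDecomp {V : Type} [Fintype V] (G : SimpleGraph V)
    (ℓ : ℕ) (ω : Fin ℓ → V) (hω : Function.Injective ω)
    (D : LinearDecomp G ω) (d : ℕ)
    (hadh : ∀ i : Fin ℓ, ∀ h : (i : ℕ) + 1 < ℓ,
      ((D.X i) ∩ D.X ⟨(i : ℕ) + 1, h⟩).ncard ≤ d)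
    (t : ℕ) (T : Transaction G ω t) : t ≤ 2 * d :=
  depth_le_of_linearDecomp_general G ℓ ω D d hadh t T
end

section
/- For every k ∈ ℕ, the graph J_k (the enhanced long-jump grid) is (f, k)-tightly connected with f(q) = (2q+1)²: for every separation (B₁, B₂) of J_k of order q < k such that both J_k[B₁ \ B₂] and J_k[B₂ \ B₁] are connected, at least one of B₁, B₂ has at most (2q+1)² vertices. -/
/-- The vertex set of the enhanced long-jump grid `J_k`: the `((4k+4) × (2k+1))`-annulus
grid (with `k' = 2k+1`, this is the `((2k'+2) × k')`-cylindrical grid) together with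
`k+1` satellite vertices. -/
def JkVertex (k : ℕ) : Type := (Fin (4 * k + 4) × Fin (2 * k + 1)) ⊕ Fin (k + 1)

/-- The enhanced long-jump grid `J_k`: the cylindrical annulus grid (first coordinate
cyclic, second radial, `0` innermost), together with jump edges along the innermost
cycle, and `k+1` satellite vertices, each adjacent to four consecutive vertices of the
outermost cycle. -/
def Jk (k : ℕ) : SimpleGraph (JkVertex k) :=
  SimpleGraph.fromRel (fun x y =>
    match x, y with
    | Sum.inl (i, j), Sum.inl (i', j') =>
        -- radial edges
        (i = i' ∧ (j' : ℕ) = (j : ℕ) + 1) ∨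
        -- cycle edges
        (j = j' ∧ (i' : ℕ) = ((i : ℕ) + 1) % (4 * k + 4)) ∨
        -- jump edges along the innermost cycle
        ((j : ℕ) = 0 ∧ (j' : ℕ) = 0 ∧
          ∃ m ≤ k, (i : ℕ) = (2 * m) % (4 * k + 4) ∧ (i' : ℕ) = (2 * m + 2) % (4 * k + 4))
    | Sum.inl (i, j), Sum.inr s =>
        -- satellite edges: satellite `s` is adjacent to four consecutive outermost vertices
        (j : ℕ) = 2 * k ∧ ∃ r < 4, (i : ℕ) = (4 * (s : ℕ) + r) % (4 * k + 4)
    | _, _ => False)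

/-!
A separator of order `q < k` misses some track and some cycle of the grid. The tracks and cycles
it misses form a connected subgraph disjoint from the separator, so they lie on one side, say in
`B₁ \ B₂`. Every grid vertex of `B₂` outside the separator then lies on a track and on a cycle
that the separator meets, which leaves at most `q²` of them, and every satellite in `B₂ \ B₁`
has a neighbour on a track that the separator meets, which leaves at most `q` of them. Hence
`|B₂| ≤ q + q² + q ≤ (2q+1)²`.
-/

open Set

theorem SimpleGraph.mem_left_iff_of_adj {V : Type*} {G : SimpleGraph V} {B₁ B₂ : Set V}
    (hcover : B₁ ∪ B₂ = univ) (hsep : ∀ u ∈ B₁ \ B₂, ∀ v ∈ B₂ \ B₁, ¬ G.Adj u v)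
    {u v : V} (huv : G.Adj u v) (hu : u ∉ B₁ ∩ B₂) (hv : v ∉ B₁ ∩ B₂) :
    u ∈ B₁ ↔ v ∈ B₁ := by
  have hmem : ∀ w, w ∉ B₁ → w ∈ B₂ := fun w hw =>
    ((hcover ▸ mem_univ w : w ∈ B₁ ∪ B₂)).resolve_left hw
  constructor
  · intro hu₁
    by_contra hv₁
    exact hsep u ⟨hu₁, fun hu₂ => hu ⟨hu₁, hu₂⟩⟩ v ⟨hmem v hv₁, hv₁⟩ huv
  · intro hv₁
    by_contra hu₁
    exact hsep v ⟨hv₁, fun hv₂ => hv ⟨hv₁, hv₂⟩⟩ u ⟨hmem u hu₁, hu₁⟩ huv.symm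

theorem Fin.iff_of_forall_iff_add_one {n : ℕ} {p : Fin (n + 1) → Prop}
    (h : ∀ a, p a ↔ p (a + 1)) (a b : Fin (n + 1)) : p a ↔ p b := by
  have hshift : ∀ c, p a ↔ p (a + c) := fun c =>
    Fin.induction (by simp) (fun t ht => by rw [ht, h, add_assoc, Fin.coeSucc_eq_succ]) c
  simpa using hshift (b - a)

theorem Fin.iff_of_forall_iff_succ {n : ℕ} {p : Fin (n + 1) → Prop}
    (h : ∀ t : Fin n, p t.castSucc ↔ p t.succ) (a b : Fin (n + 1)) : p a ↔ p b := by
  have hzero : ∀ c, p 0 ↔ p c := fun c =>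
    Fin.induction Iff.rfl (fun t ht => ht.trans (h t)) c
  exact (hzero a).symm.trans (hzero b)

theorem Set.ncard_preimage_le_of_injective {α β : Type*} {f : α → β} (hf : f.Injective)
    {s : Set β} (hs : s.Finite) : (f ⁻¹' s).ncard ≤ s.ncard := by
  rw [← ncard_image_of_injective _ hf]
  exact ncard_le_ncard (image_preimage_subset f s) hs

theorem Fin.exists_notMem_of_ncard_lt {n : ℕ} {T : Set (Fin n)} (hT : T.ncard < n) :
    ∃ i, i ∉ T := by
  by_contra! h
  rw [eq_univ_of_forall h, ncard_univ, Nat.card_eq_fintype_card, Fintype.card_fin] at hT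
  exact hT.false

instance (k : ℕ) : Finite (JkVertex k) :=
  inferInstanceAs (Finite ((Fin (4 * k + 4) × Fin (2 * k + 1)) ⊕ Fin (k + 1)))

namespace Jk

variable {k : ℕ}

theorem adj_radial (i : Fin (4 * k + 4)) (t : Fin (2 * k)) :
    (Jk k).Adj (.inl (i, t.castSucc)) (.inl (i, t.succ)) :=
  (SimpleGraph.fromRel_adj _ _ _).mpr
    ⟨fun h => Fin.castSucc_lt_succ.ne (congrArg Prod.snd (Sum.inl_injective h)),
      Or.inl (Or.inl ⟨rfl, Fin.val_succ t⟩)⟩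

theorem adj_cycle (i : Fin (4 * k + 4)) (j : Fin (2 * k + 1)) :
    (Jk k).Adj (.inl (i, j)) (.inl (i + 1, j)) :=
  (SimpleGraph.fromRel_adj _ _ _).mpr
    ⟨fun h => by simpa using congrArg Prod.fst (Sum.inl_injective h),
      Or.inl (Or.inr (Or.inl ⟨rfl, by rw [Fin.val_add, Fin.val_one']; simp⟩))⟩

theorem adj_satellite (s : Fin (k + 1)) :
    (Jk k).Adj (.inl (⟨4 * s, by omega⟩, Fin.last (2 * k))) (.inr s) := by
  refine (SimpleGraph.fromRel_adj _ _ _).mpr ⟨Sum.inl_ne_inr, Or.inl ⟨rfl, 0, by omega, ?_⟩⟩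
  simp only [add_zero]
  rw [Nat.mod_eq_of_lt (by omega)]

def hitTracks (S : Set (JkVertex k)) : Set (Fin (4 * k + 4)) := Prod.fst '' (Sum.inl ⁻¹' S)

def hitCycles (S : Set (JkVertex k)) : Set (Fin (2 * k + 1)) := Prod.snd '' (Sum.inl ⁻¹' S)

theorem ncard_hitTracks_le (S : Set (JkVertex k)) : (hitTracks S).ncard ≤ S.ncard :=
  (ncard_image_le (toFinite _)).trans <|
    ncard_preimage_le_of_injective Sum.inl_injective (toFinite S)

theorem ncard_hitCycles_le (S : Set (JkVertex k)) : (hitCycles S).ncard ≤ S.ncard :=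
  (ncard_image_le (toFinite _)).trans <|
    ncard_preimage_le_of_injective Sum.inl_injective (toFinite S)

/-- The grid vertices on a track or a cycle that the separator `S` avoids. -/
def freeVertices (S : Set (JkVertex k)) : Set (JkVertex k) :=
  Sum.inl '' {p | p.1 ∉ hitTracks S ∨ p.2 ∉ hitCycles S}

theorem notMem_of_mem_freeVertices {S : Set (JkVertex k)} {v : JkVertex k}
    (hv : v ∈ freeVertices S) : v ∉ S := by
  rintro hvS
  obtain ⟨⟨i, j⟩, hij | hij, rfl⟩ := hv
  · exact hij ⟨(i, j), hvS, rfl⟩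
  · exact hij ⟨(i, j), hvS, rfl⟩

variable {B₁ B₂ : Set (JkVertex k)}

theorem freeVertices_subset_or (hcover : B₁ ∪ B₂ = univ)
    (hsep : ∀ u ∈ B₁ \ B₂, ∀ v ∈ B₂ \ B₁, ¬ (Jk k).Adj u v) (hS : (B₁ ∩ B₂).ncard < 2 * k + 1) :
    freeVertices (B₁ ∩ B₂) ⊆ B₁ \ B₂ ∨ freeVertices (B₁ ∩ B₂) ⊆ B₂ \ B₁ := by
  set S := B₁ ∩ B₂
  have hnotMem {i j} (h : i ∉ hitTracks S ∨ j ∉ hitCycles S) : Sum.inl (i, j) ∉ S :=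
    notMem_of_mem_freeVertices ⟨(i, j), h, rfl⟩
  have side_iff {u v} (huv : (Jk k).Adj u v) (hu : u ∉ S) (hv : v ∉ S) :=
    SimpleGraph.mem_left_iff_of_adj hcover hsep huv hu hv
  have track {i} (hi : i ∉ hitTracks S) (a b) : Sum.inl (i, a) ∈ B₁ ↔ Sum.inl (i, b) ∈ B₁ :=
    Fin.iff_of_forall_iff_succ (p := fun j => Sum.inl (i, j) ∈ B₁)
      (fun t => side_iff (adj_radial i t) (hnotMem (.inl hi)) (hnotMem (.inl hi))) a b
  have cycle {j} (hj : j ∉ hitCycles S) (a b) : Sum.inl (a, j) ∈ B₁ ↔ Sum.inl (b, j) ∈ B₁ :=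
    Fin.iff_of_forall_iff_add_one (p := fun i => Sum.inl (i, j) ∈ B₁)
      (fun i => side_iff (adj_cycle i j) (hnotMem (.inr hj)) (hnotMem (.inr hj))) a b
  obtain ⟨i₀, hi₀⟩ := Fin.exists_notMem_of_ncard_lt ((ncard_hitTracks_le S).trans_lt (by omega))
  obtain ⟨j₀, hj₀⟩ := Fin.exists_notMem_of_ncard_lt ((ncard_hitCycles_le S).trans_lt hS)
  have base : ∀ v ∈ freeVertices S, v ∈ B₁ ↔ Sum.inl (i₀, j₀) ∈ B₁ := by
    rintro _ ⟨⟨i, j⟩, hi | hj, rfl⟩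
    · exact (track hi j j₀).trans (cycle hj₀ i i₀)
    · exact (cycle hj i i₀).trans (track hi₀ j j₀)
  by_cases h₀ : Sum.inl (i₀, j₀) ∈ B₁
  · exact .inl fun v hv =>
      ⟨(base v hv).2 h₀, fun hv₂ => notMem_of_mem_freeVertices hv ⟨(base v hv).2 h₀, hv₂⟩⟩
  · refine .inr fun v hv => ⟨?_, fun hv₁ => h₀ ((base v hv).1 hv₁)⟩
    exact (hcover ▸ mem_univ v : v ∈ B₁ ∪ B₂).resolve_left fun hv₁ => h₀ ((base v hv).1 hv₁)

theorem subset_of_freeVertices_subset (hfree : freeVertices (B₁ ∩ B₂) ⊆ B₁ \ B₂) :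
    B₂ ⊆ (B₁ ∩ B₂) ∪ Sum.inl '' (hitTracks (B₁ ∩ B₂) ×ˢ hitCycles (B₁ ∩ B₂)) ∪
      Sum.inr '' {s | Sum.inr s ∈ B₂ \ B₁} := by
  intro v hv₂
  by_cases hv₁ : v ∈ B₁
  · exact .inl (.inl ⟨hv₁, hv₂⟩)
  rcases v with ⟨i, j⟩ | s
  · refine .inl (.inr ⟨(i, j), ?_, rfl⟩)
    by_contra hij
    rw [mem_prod, not_and_or] at hij
    exact hv₁ (hfree ⟨(i, j), hij, rfl⟩).1
  · exact .inr ⟨s, ⟨hv₂, hv₁⟩, rfl⟩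

theorem ncard_satellites_le (hfree : freeVertices (B₁ ∩ B₂) ⊆ B₁ \ B₂)
    (hsep : ∀ u ∈ B₁ \ B₂, ∀ v ∈ B₂ \ B₁, ¬ (Jk k).Adj u v) :
    {s | Sum.inr s ∈ B₂ \ B₁}.ncard ≤ (hitTracks (B₁ ∩ B₂)).ncard := by
  refine ncard_le_ncard_of_injOn (fun s : Fin (k + 1) => (⟨4 * s, by omega⟩ : Fin (4 * k + 4)))
    (fun s hs => ?_) (fun s _ t _ hst => Fin.ext (by simpa using congrArg Fin.val hst))
  by_contra hcol
  exact hsep _ (hfree ⟨_, .inl hcol, rfl⟩) _ hs (adj_satellite s)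

theorem ncard_le_of_freeVertices_subset (hfree : freeVertices (B₁ ∩ B₂) ⊆ B₁ \ B₂)
    (hsep : ∀ u ∈ B₁ \ B₂, ∀ v ∈ B₂ \ B₁, ¬ (Jk k).Adj u v) :
    B₂.ncard ≤ (2 * (B₁ ∩ B₂).ncard + 1) ^ 2 := by
  set q := (B₁ ∩ B₂).ncard
  have htracks := ncard_hitTracks_le (B₁ ∩ B₂)
  have hcycles := ncard_hitCycles_le (B₁ ∩ B₂)
  have hsat := ncard_satellites_le hfree hsep
  calc B₂.ncard
      ≤ q + (hitTracks (B₁ ∩ B₂) ×ˢ hitCycles (B₁ ∩ B₂)).ncard +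
          {s | Sum.inr s ∈ B₂ \ B₁}.ncard := by
        refine (ncard_le_ncard (subset_of_freeVertices_subset hfree)).trans ?_
        refine (ncard_union_le _ _).trans (add_le_add ((ncard_union_le _ _).trans ?_) ?_)
        · exact Nat.add_le_add_left ncard_image_le q
        · exact ncard_image_le
    _ ≤ q + q * q + q := by
        rw [ncard_prod]
        gcongr
        exact hsat.trans htracks
    _ ≤ (2 * q + 1) ^ 2 := by nlinarith

end Jk

theorem Jk_tightly_connected_general (k : ℕ) (B₁ B₂ : Set (JkVertex k)) (q : ℕ)
    (hcover : B₁ ∪ B₂ = Set.univ)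
    (hsep : ∀ u ∈ B₁ \ B₂, ∀ v ∈ B₂ \ B₁, ¬ (Jk k).Adj u v)
    (horder : (B₁ ∩ B₂).ncard = q) (hq : q < k) :
    B₁.ncard ≤ (2 * q + 1) ^ 2 ∨ B₂.ncard ≤ (2 * q + 1) ^ 2 := by
  subst horder
  have hsep' : ∀ u ∈ B₂ \ B₁, ∀ v ∈ B₁ \ B₂, ¬ (Jk k).Adj u v :=
    fun u hu v hv huv => hsep v hv u hu huv.symm
  rcases Jk.freeVertices_subset_or hcover hsep (by omega) with hfree | hfree
  · exact .inr (Jk.ncard_le_of_freeVertices_subset hfree hsep)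
  · rw [inter_comm] at hfree ⊢
    exact .inl (Jk.ncard_le_of_freeVertices_subset hfree hsep')

/-- `J_k` is `(f, k)`-tightly connected with `f(q) = (2q+1)²`: for every
separation `(B₁, B₂)` of `J_k` of order `q < k` with both strict sides connected,
one of `B₁`, `B₂` has at most `(2q+1)²` vertices. -/
theorem Jk_tightly_connected (k : ℕ) (B₁ B₂ : Set (JkVertex k)) (q : ℕ)
    (hcover : B₁ ∪ B₂ = Set.univ)
    (hsep : ∀ u ∈ B₁ \ B₂, ∀ v ∈ B₂ \ B₁, ¬ (Jk k).Adj u v)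
    (horder : (B₁ ∩ B₂).ncard = q) (hq : q < k)
    (hc₁ : ((Jk k).induce (B₁ \ B₂)).Connected)
    (hc₂ : ((Jk k).induce (B₂ \ B₁)).Connected) :
    B₁.ncard ≤ (2 * q + 1) ^ 2 ∨ B₂.ncard ≤ (2 * q + 1) ^ 2 :=
  Jk_tightly_connected_general k B₁ B₂ q hcover hsep horder hq
end

section
/- Let G_m be the (m × m)-grid and let S be a subset of the vertices of the central (m - 2ℓ) × (m - 2ℓ)-subgrid of G_m, where ℓ = ⌊|S|^{1/4}⌋. Then G_m contains the (ℓ × ℓ)-grid as an S-rooted minor. -/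
/-
Among at least ℓ⁴ roots, some ℓ² lie in pairwise distinct columns (or, after transposing the
grid, in distinct rows). List ℓ² of them by increasing column, cut the list into ℓ blocks of ℓ,
and map the ℓ × ℓ grid onto it along a snake: row `a` of the small grid is block `a`, traversed
left to right for even `a` and right to left for odd `a`. The branch set of the `r`-th root of
block `a` is a vertical wire through its column, reaching `r` rows deep into the root-free band
of height ℓ above the central subgrid, together with two horizontal segments in that band: a
rung to the next wire of the block, one row lower, and a bridge, at the wire's end, to the wire
of its partner in the next block. Consecutive blocks are listed in opposite directions, so the ℓ
bridges between them are nested, and the wires they pass over end below them. Even blocks use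
the band above the subgrid and odd blocks the band below it.
-/

open SimpleGraph Set

theorem gridGraph_adj {m : ℕ} {p q : Fin m × Fin m} :
    (gridGraph m).Adj p q ↔ Nat.dist p.1 q.1 + Nat.dist p.2 q.2 = 1 := by
  rw [gridGraph, fromRel_adj, Nat.dist_comm (q.1 : ℕ), Nat.dist_comm (q.2 : ℕ), or_self,
    and_iff_right_iff_imp]
  rintro h rfl
  simp at h

def gridGraph.transpose (m : ℕ) : gridGraph m ≃g gridGraph m where
  toEquiv := Equiv.prodComm _ _
  map_rel_iff' := by
    intro p q
    simp only [Equiv.prodComm_apply, gridGraph_adj, Prod.fst_swap, Prod.snd_swap, add_comm]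

theorem HasRootedMinor.map {V V' W : Type*} {G : SimpleGraph V} {G' : SimpleGraph V'}
    {X : Set V} {H : SimpleGraph W} (e : G ≃g G') (h : HasRootedMinor G X H) :
    HasRootedMinor G' (e '' X) H := by
  obtain ⟨B, hroot, hconn, hdisj, hadj⟩ := h
  refine ⟨fun w => e '' B w, fun w => ?_, fun w => ?_, fun w w' hne => ?_, fun w w' hww' => ?_⟩
  · obtain ⟨x, hxB, hxX⟩ := hroot w
    exact ⟨e x, mem_image_of_mem e hxB, mem_image_of_mem e hxX⟩
  · let f : G.induce (B w) →g G'.induce (e '' B w) :=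
      ⟨fun x => ⟨e x, mem_image_of_mem e x.2⟩, e.map_adj_iff.2⟩
    refine (hconn w).map f ?_
    rintro ⟨_, x, hx, rfl⟩
    exact ⟨⟨x, hx⟩, rfl⟩
  · exact (disjoint_image_iff e.injective).2 (hdisj w w' hne)
  · obtain ⟨x, hx, y, hy, hxy⟩ := hadj w w' hww'
    exact ⟨e x, mem_image_of_mem e hx, e y, mem_image_of_mem e hy, e.map_adj_iff.2 hxy⟩

theorem SimpleGraph.induce_connected_of_exists_adj_lt {V : Type*} (G : SimpleGraph V)
    {A : Set V} {ρ : V} (hρ : ρ ∈ A) (μ : V → ℕ)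
    (h : ∀ p ∈ A, p ≠ ρ → ∃ q ∈ A, G.Adj p q ∧ μ q < μ p) : (G.induce A).Connected := by
  have reach : ∀ p (hp : p ∈ A), (G.induce A).Reachable ⟨p, hp⟩ ⟨ρ, hρ⟩ := by
    intro p
    induction hμ : μ p using Nat.strong_induction_on generalizing p with
    | _ n ih =>
      intro hp
      by_cases hpρ : p = ρ
      · subst hpρ; rfl
      obtain ⟨q, hq, hpq, hlt⟩ := h p hp hpρ
      exact (Adj.reachable (G := G.induce A) (u := ⟨p, hp⟩) (v := ⟨q, hq⟩) hpq).trans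
        (ih _ (hμ ▸ hlt) q rfl hq)
  exact (connected_iff _).2 ⟨fun x y => (reach x x.2).trans (reach y y.2).symm, ⟨⟨ρ, hρ⟩⟩⟩

theorem Set.ncard_le_ncard_image_fst_mul_ncard_image_snd {α β : Type*} [Finite α] [Finite β]
    (S : Set (α × β)) : S.ncard ≤ (Prod.fst '' S).ncard * (Prod.snd '' S).ncard := by
  rw [← ncard_prod]
  exact ncard_le_ncard fun p hp => ⟨mem_image_of_mem _ hp, mem_image_of_mem _ hp⟩

theorem exists_strictMono_forall_lt_mem {m n : ℕ} {s : Set (Fin m)} (h : n ≤ s.ncard) :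
    ∃ C : ℕ → ℕ, StrictMono C ∧ ∀ k < n, ∃ c ∈ s, (c : ℕ) = C k := by
  classical
  rw [ncard_eq_toFinset_card'] at h
  obtain ⟨t, hts, rfl⟩ := Finset.exists_subset_card_eq h
  let e := t.orderEmbOfFin rfl
  refine ⟨fun k => if hk : k < t.card then e ⟨k, hk⟩ else m + k,
    strictMono_nat_of_lt_succ fun k => ?_, fun k hk => ⟨e ⟨k, hk⟩, ?_, by simp [hk]⟩⟩
  · split_ifs with h₁ h₂ h₂
    · exact e.strictMono (Fin.mk_lt_mk.2 k.lt_succ_self)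
    · have := (e ⟨k, h₁⟩).isLt; omega
    all_goals omega
  · simpa using hts (t.orderEmbOfFin_mem rfl _)

theorem mul_add_lt_mul_add_iff {ℓ a b r s : ℕ} (hr : r < ℓ) (hs : s < ℓ) :
    ℓ * a + r < ℓ * b + s ↔ a < b ∨ a = b ∧ r < s := by
  constructor
  · intro h
    rcases lt_trichotomy a b with hab | rfl | hab
    · exact Or.inl hab
    · exact Or.inr ⟨rfl, by omega⟩
    · have := Nat.mul_le_mul_left ℓ (show b + 1 ≤ a from hab)
      rw [Nat.mul_add_one] at this
      omega
  · rintro (hab | ⟨rfl, h⟩)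
    · have := Nat.mul_le_mul_left ℓ (show a + 1 ≤ b from hab)
      rw [Nat.mul_add_one] at this
      omega
    · omega

namespace GridRouting

/-- With `n = ℓ` this orders row `a` of the small grid along the snake; with `n = m`, applied to
rows of the big grid, it swaps the bands above and below the central subgrid, so that odd
blocks are routed like even ones. -/
def snake (n a x : ℕ) : ℕ := if a % 2 = 0 then x else n - 1 - x

theorem snake_lt {n a x : ℕ} (hx : x < n) : snake n a x < n := by
  unfold snake; split_ifs <;> omega

theorem snake_snake {n a x : ℕ} (hx : x < n) : snake n a (snake n a x) = x := by
  unfold snake; split_ifs <;> omega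

theorem snake_succ {n a x : ℕ} (hx : x < n) : snake n (a + 1) x = n - 1 - snake n a x := by
  unfold snake; split_ifs <;> omega

def box (m : ℕ) (C : ℕ → ℕ) (a lo hi x y : ℕ) : Set (Fin m × Fin m) :=
  {p | lo ≤ snake m a p.1 ∧ snake m a p.1 ≤ hi ∧ C x ≤ p.2 ∧ p.2 < C y}

-- `C k` is the column of the `k`-th root; the `r`-th root of block `a` is root `ℓ * a + r`.
def wire (m ℓ : ℕ) (C : ℕ → ℕ) (a r : ℕ) : Set (Fin m × Fin m) :=
  {p | p.2 = C (ℓ * a + r) ∧ r ≤ snake m a p.1 ∧ snake m a p.1 ≤ m - ℓ + r}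

def rung (m ℓ : ℕ) (C : ℕ → ℕ) (a r : ℕ) : Set (Fin m × Fin m) :=
  box m C a (r + 1) (r + 1) (ℓ * a + r) (ℓ * a + r + 1)

def bridge (m ℓ : ℕ) (C : ℕ → ℕ) (a r : ℕ) : Set (Fin m × Fin m) :=
  box m C a r r (ℓ * a + r) (ℓ * (a + 1) + (ℓ - 1 - r))

def branchSet (m ℓ : ℕ) (C : ℕ → ℕ) (a r : ℕ) : Set (Fin m × Fin m) :=
  wire m ℓ C a r ∪ rung m ℓ C a r ∪ bridge m ℓ C a r

variable {m ℓ : ℕ} {C : ℕ → ℕ} {a r : ℕ}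

theorem lt_of_mem_box_of_mem_box (hC : StrictMono C) {p : Fin m × Fin m}
    {a lo hi x y a' lo' hi' x' y' : ℕ}
    (hp : p ∈ box m C a lo hi x y) (hp' : p ∈ box m C a' lo' hi' x' y') : x < y' ∧ x' < y :=
  ⟨hC.lt_iff_lt.1 (hp.2.2.1.trans_lt hp'.2.2.2), hC.lt_iff_lt.1 (hp'.2.2.1.trans_lt hp.2.2.2)⟩

theorem branchSet_subset (hC : StrictMono C) (hℓ : ℓ < m) :
    branchSet m ℓ C a r ⊆
      box m C a r (m - ℓ + r) (ℓ * a + r) (ℓ * a + r + 1) ∪ bridge m ℓ C a r := by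
  rintro p ((⟨hcol, hlo, hhi⟩ | ⟨hlo, hhi, hx, hy⟩) | hp)
  · exact Or.inl ⟨hlo, hhi, hcol.ge, hcol ▸ hC (Nat.lt_succ_self _)⟩
  · exact Or.inl ⟨by omega, by omega, hx, hy⟩
  · exact Or.inr hp

theorem branchSet_disjoint (hC : StrictMono C) (hm : 2 * ℓ ≤ m) {a' r' : ℕ} (hr : r < ℓ)
    (hr' : r' < ℓ) (hne : (a, r) ≠ (a', r')) :
    Disjoint (branchSet m ℓ C a r) (branchSet m ℓ C a' r') := by
  rw [Ne, Prod.mk.injEq] at hne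
  -- comparisons of root indices, restated in terms of blocks and positions for `omega`
  have := mul_add_lt_mul_add_iff hr hr' (a := a) (b := a')
  have := mul_add_lt_mul_add_iff hr' hr (a := a') (b := a)
  have := mul_add_lt_mul_add_iff hr (show ℓ - 1 - r' < ℓ by omega) (a := a) (b := a' + 1)
  have := mul_add_lt_mul_add_iff hr' (show ℓ - 1 - r < ℓ by omega) (a := a') (b := a + 1)
  refine disjoint_left.2 fun p hp hp' => ?_
  rcases branchSet_subset hC (by omega) hp with hp | hp <;>
  rcases branchSet_subset hC (by omega) hp' with hp' | hp' <;>
  obtain ⟨hcol, hcol'⟩ := lt_of_mem_box_of_mem_box hC hp hp' <;>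
  simp only [bridge, box, snake, mem_ofPred_eq] at hp hp' <;>
  split_ifs at hp hp' <;> omega

theorem branchSet_connected (hr : r < m) (hCk : C (ℓ * a + r) < m) :
    ((gridGraph m).induce (branchSet m ℓ C a r)).Connected := by
  set ρ : Fin m × Fin m := (⟨snake m a r, snake_lt hr⟩, ⟨C (ℓ * a + r), hCk⟩) with hρ_def
  have hρ : ρ ∈ branchSet m ℓ C a r :=
    Or.inl (Or.inl ⟨rfl, (snake_snake hr).ge, by simp only [ρ, snake_snake hr]; omega⟩)
  refine (gridGraph m).induce_connected_of_exists_adj_lt hρ (fun p => p.2 * m + snake m a p.1) ?_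
  rintro ⟨⟨i, hi⟩, ⟨j, hj⟩⟩ hp hpρ
  simp only [hρ_def, ne_eq, Prod.mk.injEq, Fin.mk.injEq] at hpρ
  have hsi := snake_lt (a := a) hi
  by_cases hcol : j = C (ℓ * a + r)
  · -- up the wire, towards its end at depth `r`
    refine ⟨(⟨snake m a (snake m a i - 1), snake_lt (by omega)⟩, ⟨j, hj⟩), ?_, ?_, ?_⟩
    all_goals
      simp only [branchSet, wire, rung, bridge, box, mem_union, mem_ofPred_eq, gridGraph_adj,
        Nat.dist] at hp ⊢
      simp only [snake] at *
      split_ifs at * <;> omega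
  · -- left along a rung or a bridge, towards the wire
    refine ⟨(⟨i, hi⟩, ⟨j - 1, by omega⟩), ?_, ?_, ?_⟩
    all_goals
      simp only [branchSet, wire, rung, bridge, box, mem_union, mem_ofPred_eq, gridGraph_adj,
        Nat.dist] at hp ⊢
    · omega
    · omega
    · have := Nat.sub_one_mul j m
      have : m ≤ j * m := Nat.le_mul_of_pos_left m (by omega)
      omega

theorem exists_adj_of_rung {r' : ℕ} (hC : StrictMono C) (hr' : r' = r + 1) (hrm : r' < m)
    (hC' : C (ℓ * a + r') < m) :
    ∃ x ∈ branchSet m ℓ C a r, ∃ y ∈ branchSet m ℓ C a r', (gridGraph m).Adj x y := by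
  subst hr'
  rw [← add_assoc] at hC'
  have hlt : C (ℓ * a + r) < C (ℓ * a + r + 1) := hC (by omega)
  refine ⟨(⟨snake m a (r + 1), snake_lt hrm⟩, ⟨C (ℓ * a + r + 1) - 1, by omega⟩),
    Or.inl (Or.inr ?_), (⟨snake m a (r + 1), snake_lt hrm⟩, ⟨C (ℓ * a + r + 1), hC'⟩),
    Or.inl (Or.inl ?_), ?_⟩
  · simp only [rung, box, mem_ofPred_eq, snake_snake hrm]; omega
  · simp only [wire, mem_ofPred_eq, true_and, snake_snake hrm, ← add_assoc]; omega
  · simp only [gridGraph_adj, Nat.dist]; omega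

theorem exists_adj_of_bridge {a' r' : ℕ} (hC : StrictMono C) (hr : r < ℓ) (hℓ : ℓ < m)
    (ha' : a' = a + 1) (hr' : r' = ℓ - 1 - r) (hC' : C (ℓ * a' + r') < m) :
    ∃ x ∈ branchSet m ℓ C a r, ∃ y ∈ branchSet m ℓ C a' r', (gridGraph m).Adj x y := by
  subst ha' hr'
  have hlt : C (ℓ * a + r) < C (ℓ * (a + 1) + (ℓ - 1 - r)) :=
    hC (by rw [Nat.mul_add_one]; omega)
  have hrm : r < m := by omega
  refine ⟨(⟨snake m a r, snake_lt hrm⟩, ⟨C (ℓ * (a + 1) + (ℓ - 1 - r)) - 1, by omega⟩),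
    Or.inr ?_, (⟨snake m a r, snake_lt hrm⟩, ⟨C (ℓ * (a + 1) + (ℓ - 1 - r)), hC'⟩),
    Or.inl (Or.inl ?_), ?_⟩
  · simp only [bridge, box, mem_ofPred_eq, snake_snake hrm]; omega
  · simp only [wire, mem_ofPred_eq, true_and, snake_succ (snake_lt hrm), snake_snake hrm]; omega
  · simp only [gridGraph_adj, Nat.dist]; omega

theorem mem_branchSet_of_mem_band {p : Fin m × Fin m} (hp : p.2 = C (ℓ * a + r)) (hr : r < ℓ)
    (hband : ℓ ≤ (p.1 : ℕ) ∧ (p.1 : ℕ) < m - ℓ) : p ∈ branchSet m ℓ C a r :=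
  Or.inl (Or.inl ⟨hp, by unfold snake; split_ifs <;> omega, by unfold snake; split_ifs <;> omega⟩)

theorem mul_add_snake_lt (v : Fin ℓ × Fin ℓ) : ℓ * v.1 + snake ℓ v.1 v.2 < ℓ * ℓ :=
  (mul_add_lt_mul_add_iff (snake_lt v.2.2) v.2.pos (b := ℓ) (s := 0)).2 (Or.inl v.1.2)

theorem exists_adj_of_gridGraph_adj (hC : StrictMono C) (hℓ : ℓ < m)
    (hCm : ∀ k < ℓ * ℓ, C k < m) {v w : Fin ℓ × Fin ℓ} (hvw : (gridGraph ℓ).Adj v w) :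
    ∃ x ∈ branchSet m ℓ C v.1 (snake ℓ v.1 v.2), ∃ y ∈ branchSet m ℓ C w.1 (snake ℓ w.1 w.2),
      (gridGraph m).Adj x y := by
  rw [gridGraph_adj, Nat.dist, Nat.dist] at hvw
  wlog hle : (v.1 : ℕ) + v.2 < w.1 + w.2 generalizing v w
  · obtain ⟨y, hy, x, hx, hyx⟩ := this (v := w) (w := v) (by omega) (by omega)
    exact ⟨x, hx, y, hy, hyx.symm⟩
  have hC' : C (ℓ * w.1 + snake ℓ w.1 w.2) < m := hCm _ (mul_add_snake_lt w)
  rcases (by omega : (v.1 : ℕ) = w.1 ∧ (w.2 : ℕ) = v.2 + 1 ∨ (w.1 : ℕ) = v.1 + 1 ∧ (v.2 : ℕ) = w.2)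
    with ⟨h1, h2⟩ | ⟨h1, h2⟩
  · rw [← Fin.ext h1] at hC' ⊢
    have := snake_lt (a := v.1) w.2.2
    have := snake_lt (a := v.1) v.2.2
    by_cases hpar : (v.1 : ℕ) % 2 = 0
    · exact exists_adj_of_rung hC (by simp only [snake, hpar, if_true]; omega) (by omega) hC'
    · obtain ⟨y, hy, x, hx, hyx⟩ := exists_adj_of_rung (a := v.1) (r := snake ℓ v.1 w.2) hC
        (by simp only [snake, hpar, if_false]; omega) (by omega) (hCm _ (mul_add_snake_lt v))
      exact ⟨x, hx, y, hy, hyx.symm⟩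
  · rw [Fin.ext h2]
    exact exists_adj_of_bridge hC (snake_lt w.2.2) (by omega) h1 (by rw [h1, snake_succ w.2.2]) hC'

theorem hasRootedMinor_gridGraph_of_strictMono (hC : StrictMono C) {X : Set (Fin m × Fin m)}
    (hroot : ∀ k < ℓ * ℓ, ∃ p ∈ X, (p.2 : ℕ) = C k)
    (hX : ∀ p ∈ X, ℓ ≤ (p.1 : ℕ) ∧ (p.1 : ℕ) < m - ℓ) :
    HasRootedMinor (gridGraph m) X (gridGraph ℓ) := by
  have hCm : ∀ k < ℓ * ℓ, C k < m := fun k hk => by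
    obtain ⟨p, -, hp⟩ := hroot k hk
    exact hp ▸ p.2.2
  have hm : ∀ v : Fin ℓ × Fin ℓ, 2 * ℓ < m := fun v => by
    obtain ⟨p, hpX, -⟩ := hroot 0 (Nat.mul_pos v.1.pos v.1.pos)
    have := hX p hpX
    omega
  refine ⟨fun v => branchSet m ℓ C v.1 (snake ℓ v.1 v.2), fun v => ?_, fun v => ?_,
    fun v w hvw => ?_, fun v w hvw => ?_⟩
  · obtain ⟨p, hpX, hp⟩ := hroot _ (mul_add_snake_lt v)
    exact ⟨p, mem_branchSet_of_mem_band hp (snake_lt v.2.2) (hX p hpX), hpX⟩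
  · have := hm v
    have := snake_lt (a := v.1) v.2.2
    exact branchSet_connected (by omega) (hCm _ (mul_add_snake_lt v))
  · refine branchSet_disjoint hC (hm v).le (snake_lt v.2.2) (snake_lt w.2.2) fun h => hvw ?_
    obtain ⟨h1, h2⟩ := Prod.mk.inj h
    rw [h1] at h2
    exact Prod.ext (Fin.ext h1) (Fin.ext (by rw [← snake_snake v.2.2, h2, snake_snake w.2.2]))
  · exact exists_adj_of_gridGraph_adj hC (by have := hm v; omega) hCm hvw

theorem hasRootedMinor_gridGraph_of_le_ncard_image_snd {X : Set (Fin m × Fin m)}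
    (hX : ∀ p ∈ X, ℓ ≤ (p.1 : ℕ) ∧ (p.1 : ℕ) < m - ℓ) (hcols : ℓ * ℓ ≤ (Prod.snd '' X).ncard) :
    HasRootedMinor (gridGraph m) X (gridGraph ℓ) := by
  obtain ⟨C, hC, hroot⟩ := exists_strictMono_forall_lt_mem hcols
  refine hasRootedMinor_gridGraph_of_strictMono hC (fun k hk => ?_) hX
  obtain ⟨_, ⟨p, hpX, rfl⟩, hp⟩ := hroot k hk
  exact ⟨p, hpX, hp⟩

end GridRouting

/-- if `S` is a set of vertices of the central
`(m - 2ℓ) × (m - 2ℓ)`-subgrid of the `(m × m)`-grid, where `ℓ = ⌊|S|^{1/4}⌋`, then the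
`(m × m)`-grid contains the `(ℓ × ℓ)`-grid as an `S`-rooted minor. -/
theorem grid_rooted_grid_minor (m : ℕ) (S : Set (Fin m × Fin m))
    (hS : ∀ a ∈ S,
      Nat.sqrt (Nat.sqrt S.ncard) ≤ (a.1 : ℕ) ∧
        (a.1 : ℕ) < m - Nat.sqrt (Nat.sqrt S.ncard) ∧
      Nat.sqrt (Nat.sqrt S.ncard) ≤ (a.2 : ℕ) ∧
        (a.2 : ℕ) < m - Nat.sqrt (Nat.sqrt S.ncard)) :
    HasRootedMinor (gridGraph m) S (gridGraph (Nat.sqrt (Nat.sqrt S.ncard))) := by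
  set ℓ := Nat.sqrt (Nat.sqrt S.ncard)
  have hcard : ℓ * ℓ * (ℓ * ℓ) ≤ (Prod.fst '' S).ncard * (Prod.snd '' S).ncard :=
    ((Nat.mul_le_mul (Nat.sqrt_le _) (Nat.sqrt_le _)).trans (Nat.sqrt_le _)).trans
      S.ncard_le_ncard_image_fst_mul_ncard_image_snd
  by_cases hcols : ℓ * ℓ ≤ (Prod.snd '' S).ncard
  · exact GridRouting.hasRootedMinor_gridGraph_of_le_ncard_image_snd
      (fun p hp => ⟨(hS p hp).1, (hS p hp).2.1⟩) hcols
  have hrows : ℓ * ℓ ≤ (Prod.snd '' (Prod.swap '' S)).ncard := by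
    rw [image_image]
    by_contra hrows
    exact (Nat.mul_lt_mul'' (not_le.1 hrows) (not_le.1 hcols)).not_ge hcard
  have := (GridRouting.hasRootedMinor_gridGraph_of_le_ncard_image_snd (by
    rintro _ ⟨p, hp, rfl⟩
    exact ⟨(hS p hp).2.2.1, (hS p hp).2.2.2⟩) hrows).map (gridGraph.transpose m)
  simpa [gridGraph.transpose, image_image] using this
end
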